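/- Let k, q ≥ 1. The class T^k_q is closed under taking minors and under taking disjoint unions, and T^k_q is a subclass of TW_{k−1} ∩ TD_q. -/

import Mathlib

set_option maxHeartbeats 1000000

/-! ## Bundled finite simple graphs and homomorphism counting -/

/-- A bundled finite simple graph (vertex set `Fin n`). -/
abbrev GraphB : Type := Σ n : ℕ, SimpleGraph (Fin n)

/-- The number of graph homomorphisms from `F` to `G`. -/
noncomputable def homCount {V W : Type*} (F : SimpleGraph V) (G : SimpleGraph W) : ℕ :=
  Set.ncard {f : V → W | ∀ ⦃u v⦄, F.Adj u v → G.Adj (f u) (f v)}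

/-- `G` and `H` are homomorphism indistinguishable over the class `𝓕`. -/
def HomIndist (𝓕 : Set GraphB) {V W : Type*} (G : SimpleGraph V) (H : SimpleGraph W) : Prop :=
  ∀ A ∈ 𝓕, homCount A.2 G = homCount A.2 H

/-- The homomorphism distinguishing closure of the class `𝓕`. -/
def hdCl (𝓕 : Set GraphB) : Set GraphB :=
  {A | ∀ G H : GraphB, HomIndist 𝓕 G.2 H.2 → homCount A.2 G.2 = homCount A.2 H.2}

/-! ## Pebble forest covers and the class `T^k_q` -/

/-- A `k`-pebble forest cover of depth at most `q`.  The rooted forest is encoded by its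
ancestor (partial) order `le`, in which the set of ancestors of any vertex is a chain. -/
structure PebbleForestCover {V : Type*} (G : SimpleGraph V) (k q : ℕ) where
  le : V → V → Prop
  le_refl : ∀ v, le v v
  le_antisymm : ∀ u v, le u v → le v u → u = v
  le_trans : ∀ u v w, le u v → le v w → le u w
  downChain : ∀ u v w, le u w → le v w → le u v ∨ le v u
  peb : V → Fin k
  cover : ∀ ⦃u v⦄, G.Adj u v → le u v ∨ le v u
  pebbleCond : ∀ ⦃u v w⦄, G.Adj u v → le u v → le u w → le w v → u ≠ w → peb u ≠ peb w
  heightLE : ∀ v, Set.ncard {u | le u v} ≤ q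

def HasPFC {V : Type*} (G : SimpleGraph V) (k q : ℕ) : Prop :=
  Nonempty (PebbleForestCover G k q)

/-- The class `T^k_q` of graphs admitting a `k`-pebble forest cover of depth at most `q`. -/
def Tclass (k q : ℕ) : Set GraphB := {G | HasPFC G.2 k q}

/-! ## Forest covers, treedepth, tree decompositions, treewidth -/

/-- `G` has a forest cover of height at most `q`, i.e. treedepth at most `q`. -/
def HasForestCover {V : Type*} (G : SimpleGraph V) (q : ℕ) : Prop :=
  ∃ le : V → V → Prop,
    (∀ v, le v v) ∧ (∀ u v, le u v → le v u → u = v) ∧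
    (∀ u v w, le u v → le v w → le u w) ∧
    (∀ u v w, le u w → le v w → le u v ∨ le v u) ∧
    (∀ ⦃u v⦄, G.Adj u v → le u v ∨ le v u) ∧
    (∀ v, Set.ncard {u | le u v} ≤ q)

/-- The class `TD_q` of graphs of treedepth at most `q`. -/
def TDclass (q : ℕ) : Set GraphB := {G | HasForestCover G.2 q}

/-- A tree decomposition of `G`. -/
structure TreeDecomp {V : Type*} (G : SimpleGraph V) where
  n : ℕ
  T : SimpleGraph (Fin n)
  isTree : T.IsTree
  bag : Fin n → Set V
  coversVerts : ∀ v : V, ∃ t, v ∈ bag t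
  coversEdges : ∀ ⦃u v⦄, G.Adj u v → ∃ t, u ∈ bag t ∧ v ∈ bag t
  bagsConnected : ∀ v : V, (SimpleGraph.induce {t | v ∈ bag t} T).Connected

/-- The decomposition has width at most `w`. -/
def TreeDecomp.widthLE {V : Type*} {G : SimpleGraph V} (d : TreeDecomp G) (w : ℕ) : Prop :=
  ∀ t, (d.bag t).ncard ≤ w + 1

/-- `t` lies on the (unique) path from `r` to `s` in the tree `d.T`,
i.e. `t` is an ancestor of `s` when `d.T` is rooted at `r`. -/
def TreeDecomp.anc {V : Type*} {G : SimpleGraph V} (d : TreeDecomp G) (r t s : Fin d.n) : Prop :=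
  ∀ w : d.T.Walk r s, t ∈ w.support

/-- The decomposition has depth at most `q`: for some root `r`, for every node `s`,
the union of the bags of ancestors of `s` has at most `q` vertices. -/
def TreeDecomp.depthLE {V : Type*} {G : SimpleGraph V} (d : TreeDecomp G) (q : ℕ) : Prop :=
  ∃ r : Fin d.n, ∀ s : Fin d.n, (⋃ t ∈ {t | d.anc r t s}, d.bag t).ncard ≤ q

/-- The class `TW_w` of graphs of treewidth at most `w`. -/
def TWclass (w : ℕ) : Set GraphB := {G | ∃ d : TreeDecomp G.2, d.widthLE w}

/-! ## Minors and disjoint unions -/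

/-- `H` is a minor of `G`: there are pairwise disjoint connected nonempty branch sets in `G`,
one for each vertex of `H`, such that edges of `H` are realised between branch sets. -/
def IsMinor {W V : Type*} (H : SimpleGraph W) (G : SimpleGraph V) : Prop :=
  ∃ φ : V → Option W,
    (∀ w : W, (SimpleGraph.induce {v | φ v = some w} G).Connected) ∧
    (∀ ⦃w₁ w₂⦄, H.Adj w₁ w₂ → ∃ v₁ v₂, φ v₁ = some w₁ ∧ φ v₂ = some w₂ ∧ G.Adj v₁ v₂)

/-- The disjoint union of two simple graphs. -/
def sumGraph {V W : Type*} (G : SimpleGraph V) (H : SimpleGraph W) : SimpleGraph (V ⊕ W) where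
  Adj x y :=
    match x, y with
    | Sum.inl a, Sum.inl b => G.Adj a b
    | Sum.inr a, Sum.inr b => H.Adj a b
    | _, _ => False
  symm := by
    constructor
    rintro (a | a) (b | b) h
    · exact G.symm.symm _ _ h
    · exact h.elim
    · exact h.elim
    · exact H.symm.symm _ _ h
  loopless := by
    constructor
    rintro (a | a) h
    · exact G.loopless.irrefl a h
    · exact H.loopless.irrefl a h

/-! ## Cops-and-robber games -/

/-- A robber move from `v` to `u`: a walk in `G` none of whose vertices lies in `A`
(`A` will be `X ∩ Y` for old/new cop positions `X`, `Y` on `G` plus a `k`-clique). -/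
def RobberMove {V : Type*} {k : ℕ} (G : SimpleGraph V) (A : Finset (V ⊕ Fin k)) (v u : V) :
    Prop :=
  ∃ w : G.Walk v u, ∀ x ∈ w.support, Sum.inl x ∉ A

/-- The initial cop position: all `k` cops on the auxiliary clique. -/
def initPos (V : Type*) [DecidableEq V] (k : ℕ) : Finset (V ⊕ Fin k) :=
  Finset.univ.image Sum.inr

/-- In the (non-monotone) cops-and-robber game on `G` with `k` cops, from cop position `X`
and robber position `v`, Cops can catch the robber within `q` further rounds. -/
def CopsCatch {V : Type*} [DecidableEq V] (G : SimpleGraph V) (k : ℕ) :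
    ℕ → Finset (V ⊕ Fin k) → V → Prop
  | 0, _, _ => False
  | q + 1, X, v =>
      ∃ Y : Finset (V ⊕ Fin k), Y.card = k ∧ (X ∩ Y).card = k - 1 ∧
        ∀ u : V, RobberMove G (X ∩ Y) v u → (Sum.inl u ∈ Y ∨ CopsCatch G k q Y u)

/-- Monotone variant: Cops may only move so that the robber escape space does not grow. -/
def MonCopsCatch {V : Type*} [DecidableEq V] (G : SimpleGraph V) (k : ℕ) :
    ℕ → Finset (V ⊕ Fin k) → V → Prop
  | 0, _, _ => False
  | q + 1, X, v =>
      ∃ Y : Finset (V ⊕ Fin k), Y.card = k ∧ (X ∩ Y).card = k - 1 ∧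
        (∀ u : V, RobberMove G (X ∩ Y) v u → RobberMove G X v u) ∧
        ∀ u : V, RobberMove G (X ∩ Y) v u → (Sum.inl u ∈ Y ∨ MonCopsCatch G k q Y u)

/-- Robber can evade capture for `q` further rounds from cop position `X`, robber at `v`. -/
def RobberEsc {V : Type*} [DecidableEq V] (G : SimpleGraph V) (k : ℕ) :
    ℕ → Finset (V ⊕ Fin k) → V → Prop
  | 0, _, _ => True
  | q + 1, X, v =>
      ∀ Y : Finset (V ⊕ Fin k), Y.card = k → (X ∩ Y).card = k - 1 →
        ∃ u : V, RobberMove G (X ∩ Y) v u ∧ Sum.inl u ∉ Y ∧ RobberEsc G k q Y u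

/-- Cops has a winning strategy in the `q`-round `k`-cops-and-robber game on `G`. -/
def CopsWinGame {V : Type*} [DecidableEq V] (G : SimpleGraph V) (k q : ℕ) : Prop :=
  ∀ v : V, CopsCatch G k q (initPos V k) v

/-- Cops has a winning strategy in the monotone `q`-round `k`-cops-and-robber game on `G`. -/
def MonCopsWinGame {V : Type*} [DecidableEq V] (G : SimpleGraph V) (k q : ℕ) : Prop :=
  ∀ v : V, MonCopsCatch G k q (initPos V k) v

/-- Robber has a winning strategy in the `q`-round `k`-cops-and-robber game on `G`. -/
def RobberWinsGame {V : Type*} [DecidableEq V] (G : SimpleGraph V) (k q : ℕ) : Prop :=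
  ∃ v : V, RobberEsc G k q (initPos V k) v

/-- The `h × ℓ` grid graph. -/
def gridGraph (h l : ℕ) : SimpleGraph (Fin h × Fin l) :=
  (SimpleGraph.pathGraph h).boxProd (SimpleGraph.pathGraph l)

/-! ## The CFI-like construction `G_U` -/

/-- Vertices of `G_U`: pairs `(v, S)` with `S` a set of edges incident to `v` whose
parity matches `|{v} ∩ U|`. -/
def CFIvert {V : Type*} (G : SimpleGraph V) (U : Set V) : Type _ :=
  {p : V × Set (Sym2 V) // p.2 ⊆ G.incidenceSet p.1 ∧ (Even p.2.ncard ↔ p.1 ∉ U)}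

/-- The CFI-like graph `G_U` of Roberson. -/
def CFI {V : Type*} (G : SimpleGraph V) (U : Set V) : SimpleGraph (CFIvert G U) where
  Adj x y := G.Adj x.1.1 y.1.1 ∧ s(x.1.1, y.1.1) ∉ symmDiff x.1.2 y.1.2
  symm := by
    constructor
    rintro x y ⟨h1, h2⟩
    refine ⟨h1.symm, ?_⟩
    rw [Sym2.eq_swap, symmDiff_comm]
    exact h2
  loopless := by
    constructor
    rintro x ⟨h1, _⟩
    exact G.loopless.irrefl _ h1

/-! ## Counting first-order logic -/

/-- Formulae of first-order counting logic `C` with variables indexed by `α`. -/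
inductive CForm (α : Type) : Type
  | eq : α → α → CForm α
  | adj : α → α → CForm α
  | not : CForm α → CForm α
  | or : CForm α → CForm α → CForm α
  | and : CForm α → CForm α → CForm α
  | count : ℕ → α → CForm α → CForm α

namespace CForm

variable {α : Type} [DecidableEq α]

/-- Quantifier rank. -/
def qr : CForm α → ℕ
  | eq _ _ => 0
  | adj _ _ => 0
  | not φ => qr φ
  | or φ ψ => max (qr φ) (qr ψ)
  | and φ ψ => max (qr φ) (qr ψ)
  | count _ _ φ => qr φ + 1

/-- Free variables. -/
def freeVars : CForm α → Finset α
  | eq i j => {i, j}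
  | adj i j => {i, j}
  | not φ => freeVars φ
  | or φ ψ => freeVars φ ∪ freeVars ψ
  | and φ ψ => freeVars φ ∪ freeVars ψ
  | count _ i φ => (freeVars φ).erase i

/-- Satisfaction in a simple graph, relative to a partial variable assignment. -/
def Sat {V : Type*} (G : SimpleGraph V) : CForm α → (α → Option V) → Prop
  | eq i j, a => ∃ v, a i = some v ∧ a j = some v
  | adj i j, a => ∃ v w, a i = some v ∧ a j = some w ∧ G.Adj v w
  | not φ, a => ¬ Sat G φ a
  | or φ ψ, a => Sat G φ a ∨ Sat G ψ a
  | and φ ψ, a => Sat G φ a ∧ Sat G ψ a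
  | count t i φ, a =>
      ∃ s : Finset V, t ≤ s.card ∧ ∀ v ∈ s, Sat G φ (fun j => if j = i then some v else a j)

/-- Guarded formulae: every quantifier occurs as `∃^{≥t} y (E x y ∧ ψ)` with `x ≠ y`. -/
def Guarded : CForm α → Prop
  | count _ y (and (adj x y') χ) => y' = y ∧ x ≠ y ∧ Guarded χ
  | count _ _ _ => False
  | eq _ _ => True
  | adj _ _ => True
  | not φ => Guarded φ
  | or φ ψ => Guarded φ ∧ Guarded ψ
  | and φ ψ => Guarded φ ∧ Guarded ψ

end CForm

/-! ## Labelled graphs, products, construction trees -/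

/-- A `k`-labelled finite graph. -/
structure LGraph (k : ℕ) : Type 1 where
  V : Type
  fin : Finite V
  G : SimpleGraph V
  ν : Fin k → Option V

namespace LGraph

variable {k : ℕ}

/-- Number of homomorphisms between `k`-labelled graphs. -/
noncomputable def lhomCount (F G : LGraph k) : ℕ :=
  Set.ncard {f : F.V → G.V |
    (∀ ⦃u v⦄, F.G.Adj u v → G.G.Adj (f u) (f v)) ∧
    ∀ i v, F.ν i = some v → ∃ w, G.ν i = some w ∧ f v = w}

/-- Remove label `i`. -/
def removeLabel (A : LGraph k) (i : Fin k) : LGraph k :=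
  { A with ν := fun j => if j = i then none else A.ν j }

/-- Every vertex carries at least one label. -/
def FullyLabelled (A : LGraph k) : Prop := ∀ v : A.V, ∃ i, A.ν i = some v

/-- Adjacency on the disjoint sum of two labelled graphs. -/
def sumAdj (A B : LGraph k) : A.V ⊕ B.V → A.V ⊕ B.V → Prop
  | Sum.inl u, Sum.inl v => A.G.Adj u v
  | Sum.inr u, Sum.inr v => B.G.Adj u v
  | _, _ => False

lemma sumAdj_symm (A B : LGraph k) : ∀ x y, sumAdj A B x y → sumAdj A B y x := by
  rintro (u | u) (v | v) h
  · exact A.G.symm.symm _ _ h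
  · exact h.elim
  · exact h.elim
  · exact B.G.symm.symm _ _ h

/-- The gluing relation: vertices carrying the same label get identified. -/
def glue (A B : LGraph k) : A.V ⊕ B.V → A.V ⊕ B.V → Prop := fun x y =>
  ∃ i : Fin k, (A.ν i).map Sum.inl = some x ∧ (B.ν i).map Sum.inr = some y

/-- The product of two `k`-labelled graphs: disjoint union, identify equally labelled
vertices, suppress loops and parallel edges. -/
def product (A B : LGraph k) : LGraph k where
  V := Quot (glue A B)
  fin := by
    haveI := A.fin
    haveI := B.fin
    exact Finite.of_surjective (Quot.mk _) (fun x => Quot.inductionOn x fun a => ⟨a, rfl⟩)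
  G :=
    { Adj := fun x y =>
        x ≠ y ∧ ∃ u v, Quot.mk _ u = x ∧ Quot.mk _ v = y ∧ sumAdj A B u v
      symm := by
        constructor
        rintro x y ⟨hne, u, v, hu, hv, h⟩
        exact ⟨hne.symm, v, u, hv, hu, sumAdj_symm A B u v h⟩
      loopless := ⟨fun x h => h.1 rfl⟩ }
  ν := fun i =>
    ((A.ν i).map fun v => Quot.mk _ (Sum.inl v)).orElse
      fun _ => (B.ν i).map fun v => Quot.mk _ (Sum.inr v)

/-- Isomorphism of labelled graphs. -/
def LIso (A B : LGraph k) : Prop :=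
  ∃ e : A.G ≃g B.G, ∀ i, (A.ν i).map (fun v => e v) = B.ν i

end LGraph

/-- `k`-construction trees: leaves carry (fully labelled) graphs, unary nodes remove
one label, binary nodes take products. -/
inductive CT (k : ℕ) : Type 1
  | leaf : LGraph k → CT k
  | elim : Fin k → CT k → CT k
  | prod : CT k → CT k → CT k

namespace CT

variable {k : ℕ}

/-- The labelled graph constructed by a construction tree. -/
def graphOf : CT k → LGraph k
  | leaf A => A
  | elim i t => (graphOf t).removeLabel i
  | prod t₁ t₂ => (graphOf t₁).product (graphOf t₂)

/-- Validity: leaves are fully labelled and elimination nodes remove an assigned label. -/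
def Valid : CT k → Prop
  | leaf A => A.FullyLabelled
  | elim i t => Valid t ∧ (graphOf t).ν i ≠ none
  | prod t₁ t₂ => Valid t₁ ∧ Valid t₂

/-- Guarded validity: labels may only be removed from vertices with a labelled neighbour. -/
def GuardedValid : CT k → Prop
  | leaf A => A.FullyLabelled
  | elim i t => GuardedValid t ∧
      ∃ v, (graphOf t).ν i = some v ∧
        ∃ j w, (graphOf t).ν j = some w ∧ (graphOf t).G.Adj v w
  | prod t₁ t₂ => GuardedValid t₁ ∧ GuardedValid t₂

/-- The elimination depth: maximal number of elimination nodes on a root-to-leaf path. -/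
def elimDepth : CT k → ℕ
  | leaf _ => 0
  | elim _ t => elimDepth t + 1
  | prod t₁ t₂ => max (elimDepth t₁) (elimDepth t₂)

end CT

/-- The class `L^k_q` of `k`-labelled graphs admitting a `k`-construction tree of
elimination depth at most `q`. -/
def Lclass (k q : ℕ) : Set (LGraph k) :=
  {F | ∃ t : CT k, CT.Valid t ∧ CT.elimDepth t ≤ q ∧ LGraph.LIso (CT.graphOf t) F}

/-- The class `GL^k_q`: as `L^k_q`, but labels may only be removed from vertices with a
labelled neighbour. -/
def GLclass (k q : ℕ) : Set (LGraph k) :=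
  {F | ∃ t : CT k, CT.GuardedValid t ∧ CT.elimDepth t ≤ q ∧ LGraph.LIso (CT.graphOf t) F}

/-- The class `GE^k_q` of unlabelled graphs underlying graphs in `GL^k_q`. -/
def GEclass (k q : ℕ) : Set GraphB :=
  {G | ∃ F ∈ GLclass k q, Nonempty (F.G ≃g G.2)}

/-! ## The bijective pebble game -/

/-- `γ` is a partial isomorphism between `G` and `H`. -/
def PartialIso {V W : Type*} (G : SimpleGraph V) (H : SimpleGraph W) {k : ℕ}
    (γ : Fin k → Option (V × W)) : Prop :=
  ∀ i j vi wi vj wj, γ i = some (vi, wi) → γ j = some (vj, wj) →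
    ((vi = vj ↔ wi = wj) ∧ (G.Adj vi vj ↔ H.Adj wi wj))

/-- Duplicator wins the `q`-round bijective `k`-pebble game on `G` and `H` from position `γ`. -/
def DupWins {V W : Type*} (G : SimpleGraph V) (H : SimpleGraph W) (k : ℕ) :
    ℕ → (Fin k → Option (V × W)) → Prop
  | 0, γ => PartialIso G H γ
  | q + 1, γ => PartialIso G H γ ∧
      ∀ p : Fin k, ∃ f : V ≃ W, ∀ v : V,
        DupWins G H k q (fun j => if j = p then some (v, f v) else γ j)

/-
Forgetting the pebbles, a `k`-pebble forest cover becomes a forest cover whose vertices carry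
bags of at most `k` ancestors, and such bags can be pebbled back greedily from the roots down.
Unlike pebblings, bags survive taking minors, because a connected branch set reaching from above
a vertex `c` to below it must meet the bag of `c`. Adding a common root above the roots of the
forest, the parent edges form a tree on which the bags are a tree decomposition of width `k - 1`.
The depth bound and closure under disjoint unions are immediate.
-/

theorem SimpleGraph.exists_walk_support_subset_of_connected_induce {V : Type*}
    {G : SimpleGraph V} {s : Set V} (h : (G.induce s).Connected) {u v : V} (hu : u ∈ s)
    (hv : v ∈ s) : ∃ p : G.Walk u v, ∀ x ∈ p.support, x ∈ s := by
  obtain ⟨p⟩ := h.preconnected ⟨u, hu⟩ ⟨v, hv⟩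
  have hp : ∀ x ∈ (p.map (SimpleGraph.Embedding.induce s).toHom).support, x ∈ s := by
    simp only [SimpleGraph.Walk.support_map, List.mem_map]
    rintro _ ⟨y, -, rfl⟩
    exact y.2
  exact ⟨_, hp⟩

theorem TreeDecomp.exists_widthLE_of_isTree {V ι : Type*} [Finite ι] {G : SimpleGraph V}
    {T : SimpleGraph ι} (hT : T.IsTree) (bag : ι → Set V) (coversVerts : ∀ v, ∃ t, v ∈ bag t)
    (coversEdges : ∀ ⦃u v⦄, G.Adj u v → ∃ t, u ∈ bag t ∧ v ∈ bag t)
    (bagsConnected : ∀ v, (T.induce {t | v ∈ bag t}).Connected) {w : ℕ}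
    (hw : ∀ t, (bag t).ncard ≤ w + 1) : ∃ d : TreeDecomp G, d.widthLE w := by
  let e := Finite.equivFin ι
  let φ : T →g T.comap e.symm := (SimpleGraph.Iso.comap e.symm T).symm.toHom
  refine ⟨{
    n := Nat.card ι
    T := T.comap e.symm
    isTree := (SimpleGraph.Iso.comap e.symm T).isTree_iff.2 hT
    bag := bag ∘ e.symm
    coversVerts v := let ⟨t, ht⟩ := coversVerts v; ⟨e t, by simpa using ht⟩
    coversEdges _ _ h := let ⟨t, ht⟩ := coversEdges h; ⟨e t, by simpa using ht⟩
    bagsConnected v := (bagsConnected v).map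
      (SimpleGraph.induceHom φ fun t ht => by simpa [φ] using ht)
      fun t => ⟨⟨e.symm t, t.2⟩, Subtype.ext (e.apply_symm_apply t)⟩ }, fun t => hw _⟩

namespace PebbleForestCover

variable {V W : Type*} {G : SimpleGraph V} {H : SimpleGraph W} {k q : ℕ}

theorem hasForestCover (c : PebbleForestCover G k q) : HasForestCover G q :=
  ⟨c.le, c.le_refl, c.le_antisymm, c.le_trans, c.downChain, c.cover, c.heightLE⟩

def comap [Finite W] (c : PebbleForestCover H k q) (f : G →g H)
    (hf : Function.Injective f) : PebbleForestCover G k q where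
  le u v := c.le (f u) (f v)
  le_refl _ := c.le_refl _
  le_antisymm _ _ h₁ h₂ := hf (c.le_antisymm _ _ h₁ h₂)
  le_trans _ _ _ := c.le_trans _ _ _
  downChain _ _ _ := c.downChain _ _ _
  peb := c.peb ∘ f
  cover _ _ h := c.cover (f.map_adj h)
  pebbleCond _ _ _ h h₁ h₂ h₃ hne := c.pebbleCond (f.map_adj h) h₁ h₂ h₃ (hf.ne hne)
  heightLE v := (Set.ncard_le_ncard_of_injOn f (fun _ h => h) hf.injOn).trans (c.heightLE (f v))

def sum (cG : PebbleForestCover G k q) (cH : PebbleForestCover H k q) :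
    PebbleForestCover (sumGraph G H) k q where
  le := Sum.LiftRel cG.le cH.le
  le_refl := by rintro (a | a); exacts [.inl (cG.le_refl a), .inr (cH.le_refl a)]
  le_antisymm := by
    rintro _ _ (h₁ | h₁) (h₂ | h₂)
    exacts [congrArg _ (cG.le_antisymm _ _ h₁ h₂), congrArg _ (cH.le_antisymm _ _ h₁ h₂)]
  le_trans := by
    rintro _ _ _ (h₁ | h₁) (h₂ | h₂)
    exacts [.inl (cG.le_trans _ _ _ h₁ h₂), .inr (cH.le_trans _ _ _ h₁ h₂)]
  downChain := by
    rintro _ _ _ (h₁ | h₁) (h₂ | h₂)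
    · exact (cG.downChain _ _ _ h₁ h₂).imp .inl .inl
    · exact (cH.downChain _ _ _ h₁ h₂).imp .inr .inr
  peb := Sum.elim cG.peb cH.peb
  cover := by
    rintro (a | a) (b | b) h
    · exact (cG.cover h).imp .inl .inl
    · exact h.elim
    · exact h.elim
    · exact (cH.cover h).imp .inr .inr
  pebbleCond := by
    rintro _ _ _ h (h₁ | h₁) (h₂ | h₂) (h₃ | h₃) hne
    · exact cG.pebbleCond h h₁ h₂ h₃ (hne ∘ congrArg _)
    · exact cH.pebbleCond h h₁ h₂ h₃ (hne ∘ congrArg _)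
  heightLE := by
    rintro (v | v)
    · have : {u | Sum.LiftRel cG.le cH.le u (.inl v)} = Sum.inl '' {u | cG.le u v} := by
        ext (u | u) <;> simp
      rw [this, Set.ncard_image_of_injective _ Sum.inl_injective]
      exact cG.heightLE v
    · have : {u | Sum.LiftRel cG.le cH.le u (.inr v)} = Sum.inr '' {u | cH.le u v} := by
        ext (u | u) <;> simp
      rw [this, Set.ncard_image_of_injective _ Sum.inr_injective]
      exact cH.heightLE v

end PebbleForestCover

/-- For a pebble forest cover, `bag v` is the set of ancestors of `v` whose pebble is still in
place at `v`. -/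
structure BagForestCover {V : Type*} (G : SimpleGraph V) (k q : ℕ) where
  le : V → V → Prop
  le_refl : ∀ v, le v v
  le_antisymm : ∀ u v, le u v → le v u → u = v
  le_trans : ∀ u v w, le u v → le v w → le u w
  downChain : ∀ u v w, le u w → le v w → le u v ∨ le v u
  cover : ∀ ⦃u v⦄, G.Adj u v → le u v ∨ le v u
  heightLE : ∀ v, Set.ncard {u | le u v} ≤ q
  bag : V → Set V
  le_of_mem_bag : ∀ ⦃u v⦄, u ∈ bag v → le u v
  mem_bag_self : ∀ v, v ∈ bag v
  ncard_bag_le : ∀ v, (bag v).ncard ≤ k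
  mem_bag_of_adj : ∀ ⦃u v⦄, G.Adj u v → le u v → u ∈ bag v
  mem_bag_of_le_of_le : ∀ ⦃u v w⦄, u ∈ bag v → le u w → le w v → u ∈ bag w

def PebbleForestCover.toBagForestCover {V : Type*} {G : SimpleGraph V} {k q : ℕ}
    (c : PebbleForestCover G k q) : BagForestCover G k q where
  __ := c
  bag v := {u | c.le u v ∧ ∀ w, c.le u w → c.le w v → u ≠ w → c.peb u ≠ c.peb w}
  le_of_mem_bag _ _ h := h.1
  mem_bag_self v := ⟨c.le_refl v, fun _ h₁ h₂ hne => (hne (c.le_antisymm _ _ h₁ h₂)).elim⟩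
  ncard_bag_le v := by
    refine (Set.ncard_le_ncard_of_injOn c.peb (fun _ _ => Set.mem_univ _) ?_).trans (by simp)
    intro a ha b hb hab
    by_contra hne
    rcases c.downChain a b v ha.1 hb.1 with h | h
    · exact ha.2 b h hb.1 hne hab
    · exact hb.2 a h ha.1 (Ne.symm hne) hab.symm
  mem_bag_of_adj _ _ h hle := ⟨hle, fun _ h₁ h₂ hne => c.pebbleCond h hle h₁ h₂ hne⟩
  mem_bag_of_le_of_le _ _ _ h h₁ h₂ :=
    ⟨h₁, fun x hx₁ hx₂ hne => h.2 x hx₁ (c.le_trans _ _ _ hx₂ h₂) hne⟩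

namespace BagForestCover

variable {V W : Type*} {G : SimpleGraph V} {k q : ℕ} (B : BagForestCover G k q)

noncomputable def depth (v : V) : ℕ := {u | B.le u v}.ncard

theorem le_or_le_of_adj {t₁ t₂ v₁ v₂ : V} (h₁ : B.le t₁ v₁) (h₂ : B.le t₂ v₂)
    (hv : G.Adj v₁ v₂) : B.le t₁ t₂ ∨ B.le t₂ t₁ := by
  rcases B.cover hv with h₁₂ | h₂₁
  · exact B.downChain _ _ _ (B.le_trans _ _ _ h₁ h₁₂) h₂
  · exact B.downChain _ _ _ h₁ (B.le_trans _ _ _ h₂ h₂₁)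

theorem exists_mem_support_mem_bag {c y x : V} (p : G.Walk y x) (hcy : B.le c y)
    (hxc : B.le x c) : ∃ b ∈ p.support, b ∈ B.bag c := by
  induction p with
  | nil =>
    obtain rfl := B.le_antisymm _ _ hcy hxc
    exact ⟨c, by simp, B.mem_bag_self c⟩
  | @cons y z x h p ih =>
    by_cases hcz : B.le c z
    · obtain ⟨b, hb, hbc⟩ := ih hcz hxc
      exact ⟨b, List.mem_cons_of_mem _ hb, hbc⟩
    · have hzy := (B.cover h).resolve_left fun hyz => hcz (B.le_trans _ _ _ hcy hyz)
      have hzc := (B.downChain z c _ hzy hcy).resolve_right hcz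
      exact ⟨z, by simp, B.mem_bag_of_le_of_le (B.mem_bag_of_adj h.symm hzy) hzc hcy⟩

theorem exists_mem_bag_of_connected_induce {s : Set V} (hs : (G.induce s).Connected)
    {x y c : V} (hx : x ∈ s) (hy : y ∈ s) (hxc : B.le x c) (hcy : B.le c y) :
    ∃ b ∈ B.bag c, b ∈ s := by
  obtain ⟨p, hp⟩ := SimpleGraph.exists_walk_support_subset_of_connected_induce hs hy hx
  obtain ⟨b, hb, hbc⟩ := B.exists_mem_support_mem_bag p hcy hxc
  exact ⟨b, hbc, hp b hb⟩

variable [Finite V]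

theorem depth_le_depth {u v : V} (h : B.le u v) : B.depth u ≤ B.depth v :=
  Set.ncard_le_ncard (fun _ hx => B.le_trans _ _ _ hx h)

theorem eq_of_le_of_depth_le {u v : V} (h : B.le u v) (hd : B.depth v ≤ B.depth u) : u = v := by
  have hs := Set.eq_of_subset_of_ncard_le (fun _ hx => B.le_trans _ _ _ hx h) hd
  exact B.le_antisymm u v h (hs.ge (B.le_refl v))

theorem depth_pos (v : V) : 0 < B.depth v :=
  (Set.ncard_pos (Set.toFinite _)).2 ⟨v, B.le_refl v⟩

theorem depth_lt_depth {u v : V} (h : B.le u v) (hne : u ≠ v) : B.depth u < B.depth v :=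
  (B.depth_le_depth h).lt_of_ne fun hd => hne (B.eq_of_le_of_depth_le h hd.ge)

/-- Greedy pebbling in order of increasing depth: the members of `bag v` other than `v` are
fewer than `k` and strictly less deep than `v`. -/
theorem exists_peb : ∃ peb : V → Fin k, ∀ v, ∀ u ∈ B.bag v, u ≠ v → peb u ≠ peb v := by
  suffices ∀ n, ∃ peb : V → Fin k, ∀ v, B.depth v ≤ n → ∀ u ∈ B.bag v, u ≠ v → peb u ≠ peb v by
    obtain ⟨peb, hpeb⟩ := this q
    exact ⟨peb, fun v => hpeb v (B.heightLE v)⟩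
  intro n
  induction n with
  | zero =>
    refine ⟨fun v => ⟨0, ?_⟩, fun v hv => absurd hv (B.depth_pos v).not_ge⟩
    exact ((Set.ncard_pos (Set.toFinite _)).2 ⟨v, B.mem_bag_self v⟩).trans_le (B.ncard_bag_le v)
  | succ n ih =>
    obtain ⟨peb, hpeb⟩ := ih
    have hfree : ∀ v, ∃ i : Fin k, i ∉ peb '' (B.bag v \ {v}) := by
      intro v
      by_contra! hall
      have hk : k ≤ (B.bag v \ {v}).ncard := calc
        k = (Set.univ : Set (Fin k)).ncard := by simp
        _ ≤ (peb '' (B.bag v \ {v})).ncard := Set.ncard_le_ncard fun i _ => hall i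
        _ ≤ (B.bag v \ {v}).ncard := Set.ncard_image_le
      exact hk.not_gt <|
        (Set.ncard_sdiff_singleton_lt_of_mem (B.mem_bag_self v)).trans_le (B.ncard_bag_le v)
    choose free hfree using hfree
    refine ⟨fun v => if B.depth v = n + 1 then free v else peb v, fun v hv u hu hne => ?_⟩
    have hdu := B.depth_lt_depth (B.le_of_mem_bag hu) hne
    dsimp only
    rw [if_neg (by omega : B.depth u ≠ n + 1)]
    split_ifs with hdv
    · exact fun h => hfree v ⟨u, ⟨hu, hne⟩, h⟩
    · exact hpeb v (by omega) u hu hne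

theorem hasPFC (B : BagForestCover G k q) : HasPFC G k q := by
  obtain ⟨peb, hpeb⟩ := B.exists_peb
  exact ⟨{ B with
    peb
    pebbleCond := fun _ _ _ h hle h₁ h₂ hne =>
      hpeb _ _ (B.mem_bag_of_le_of_le (B.mem_bag_of_adj h hle) h₁ h₂) hne }⟩

/-- Take a vertex of minimal depth: lying below it propagates along edges. -/
theorem exists_le_of_connected_induce {s : Set V} (hs : (G.induce s).Connected) :
    ∃ t ∈ s, ∀ x ∈ s, B.le t x := by
  obtain ⟨t, ht, hmin⟩ := Set.exists_min_image s B.depth (Set.toFinite s)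
    (let ⟨⟨x, hx⟩⟩ := hs.nonempty; ⟨x, hx⟩)
  refine ⟨t, ht, fun x hx => ?_⟩
  obtain ⟨p, hp⟩ := SimpleGraph.exists_walk_support_subset_of_connected_induce hs ht hx
  suffices ∀ {a b : V} (p : G.Walk a b), (∀ z ∈ p.support, z ∈ s) → B.le t a → B.le t b from
    this p hp (B.le_refl t)
  intro a b p
  induction p with
  | nil => exact fun _ h => h
  | @cons a z b h p ih =>
    intro hp hta
    refine ih (fun x hx => hp x (List.mem_cons_of_mem _ hx)) ?_
    rcases B.cover h with haz | hza
    · exact B.le_trans _ _ _ hta haz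
    · rcases B.downChain t z a hta hza with htz | hzt
      · exact htz
      · rw [B.eq_of_le_of_depth_le hzt (hmin z (hp z (by simp)))]
        exact B.le_refl t

/-- Order the branch sets of the minor by their tops; the bag of a branch set collects the
branch sets meeting the bag of its top. -/
theorem nonempty_of_isMinor (B : BagForestCover G k q) {H : SimpleGraph W} (hHG : IsMinor H G) :
    Nonempty (BagForestCover H k q) := by
  obtain ⟨φ, hconn, hedge⟩ := hHG
  choose top htop hle using fun w => B.exists_le_of_connected_induce (hconn w)
  have htop_inj : Function.Injective top := fun w₁ w₂ h =>
    Option.some_injective _ ((htop w₁).symm.trans (h ▸ htop w₂))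
  have hmeet {w : W} {c x : V} (hx : φ x = some w) (htc : B.le (top w) c) (hcx : B.le c x) :
      ∃ b ∈ B.bag c, φ b = some w :=
    B.exists_mem_bag_of_connected_induce (hconn w) (htop w) hx htc hcx
  refine ⟨{
    le w₁ w₂ := B.le (top w₁) (top w₂)
    le_refl _ := B.le_refl _
    le_antisymm _ _ h₁ h₂ := htop_inj (B.le_antisymm _ _ h₁ h₂)
    le_trans _ _ _ := B.le_trans _ _ _
    downChain _ _ _ := B.downChain _ _ _
    cover w₁ w₂ h :=
      let ⟨v₁, v₂, h₁, h₂, hv⟩ := hedge h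
      B.le_or_le_of_adj (hle w₁ v₁ h₁) (hle w₂ v₂ h₂) hv
    heightLE w :=
      (Set.ncard_le_ncard_of_injOn top (fun _ h => h) htop_inj.injOn).trans (B.heightLE _)
    bag w := Option.some ⁻¹' (φ '' B.bag (top w))
    le_of_mem_bag := ?_
    mem_bag_self w := ⟨top w, B.mem_bag_self _, htop w⟩
    ncard_bag_le w :=
      ((Set.ncard_le_ncard_of_injOn some (fun _ h => h) (Option.some_injective W).injOn).trans
        Set.ncard_image_le).trans (B.ncard_bag_le _)
    mem_bag_of_adj := ?_
    mem_bag_of_le_of_le := ?_ }⟩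
  · rintro w' w ⟨u, hu, hφu⟩
    exact B.le_trans _ _ _ (hle w' u hφu) (B.le_of_mem_bag hu)
  · intro w₁ w₂ h hle₁₂
    obtain ⟨v₁, v₂, h₁, h₂, hv⟩ := hedge h
    have hv₂ : B.le (top w₂) v₂ := hle w₂ v₂ h₂
    rcases B.cover hv with h₁₂ | h₂₁
    · rcases B.downChain v₁ (top w₂) v₂ h₁₂ hv₂ with h' | h'
      · exact ⟨v₁, B.mem_bag_of_le_of_le (B.mem_bag_of_adj hv h₁₂) h' hv₂, h₁⟩
      · exact hmeet h₁ hle₁₂ h'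
    · exact hmeet h₁ hle₁₂ (B.le_trans _ _ _ hv₂ h₂₁)
  · rintro w' w w'' ⟨u, hu, hφu⟩ h₁ h₂
    rcases B.downChain u (top w'') (top w) (B.le_of_mem_bag hu) h₂ with h | h
    · exact ⟨u, B.mem_bag_of_le_of_le hu h h₂, hφu⟩
    · exact hmeet hφu h₁ h

/-- The witness is the deepest proper ancestor. -/
theorem exists_parent {v : V} (h : ∃ u, B.le u v ∧ u ≠ v) :
    ∃ p, B.le p v ∧ p ≠ v ∧ ∀ u, B.le u v → u ≠ v → B.le u p := by
  obtain ⟨p, ⟨hpv, hne⟩, hmax⟩ :=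
    Set.exists_max_image {u | B.le u v ∧ u ≠ v} B.depth (Set.toFinite _) h
  refine ⟨p, hpv, hne, fun u huv hu => ?_⟩
  rcases B.downChain u p v huv hpv with hup | hpu
  · exact hup
  · obtain rfl : p = u := by
      by_contra hpu'
      exact (B.depth_lt_depth hpu hpu').not_ge (hmax u ⟨huv, hu⟩)
    exact B.le_refl p

open Classical in
noncomputable def parent (v : V) : Option V :=
  if h : ∃ u, B.le u v ∧ u ≠ v then some (B.exists_parent h).choose else none

theorem parent_eq_some {v p : V} (h : B.parent v = some p) :
    B.le p v ∧ p ≠ v ∧ ∀ u, B.le u v → u ≠ v → B.le u p := by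
  unfold parent at h
  split_ifs at h with hv
  exact Option.some_injective _ h ▸ (B.exists_parent hv).choose_spec

theorem parent_eq_none {v : V} (h : B.parent v = none) : ∀ u, B.le u v → u = v := by
  unfold parent at h
  split_ifs at h with hv
  exact fun u hu => by_contra fun hne => hv ⟨u, hu, hne⟩

theorem parent_ne_some_self (v : V) : B.parent v ≠ some v := fun h =>
  (B.parent_eq_some h).2.1 rfl

/-- The forest made into a tree by a new root `none` above its roots. -/
def tree : SimpleGraph (Option V) :=
  SimpleGraph.fromEdgeSet (Set.range fun v => s(some v, B.parent v))

def nodeBag : Option V → Set V := fun t => t.elim ∅ B.bag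

theorem tree_adj_parent (v : V) : B.tree.Adj (some v) (B.parent v) :=
  (SimpleGraph.fromEdgeSet_adj _).2 ⟨⟨v, rfl⟩, (B.parent_ne_some_self v).symm⟩

theorem reachable_none (v : V) : B.tree.Reachable (some v) none := by
  induction hd : B.depth v using Nat.strong_induction_on generalizing v with
  | _ n ih =>
    cases hp : B.parent v with
    | none => exact (hp ▸ B.tree_adj_parent v).reachable
    | some p =>
      have hpv := B.parent_eq_some hp
      exact (hp ▸ B.tree_adj_parent v).reachable.trans
        (ih _ (hd ▸ B.depth_lt_depth hpv.1 hpv.2.1) p rfl)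

theorem injective_edge_parent : Function.Injective fun v => s(some v, B.parent v) := by
  intro u v huv
  rcases Sym2.eq_iff.1 huv with ⟨h, -⟩ | ⟨hu, hv⟩
  · exact Option.some_injective _ h
  · exact B.le_antisymm _ _ (B.parent_eq_some hu.symm).1 (B.parent_eq_some hv).1

theorem tree_isTree : B.tree.IsTree := by
  refine SimpleGraph.isTree_iff_connected_and_card.2 ⟨?_, ?_⟩
  · refine (SimpleGraph.connected_iff_exists_forall_reachable _).2 ⟨none, ?_⟩
    rintro (_ | v)
    · rfl
    · exact (B.reachable_none v).symm
  · have hdiag : Disjoint (Set.range fun v => s(some v, B.parent v)) Sym2.diagSet := by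
      refine Set.disjoint_left.2 ?_
      rintro _ ⟨v, rfl⟩ h
      exact B.parent_ne_some_self v (Sym2.mk_isDiag_iff.1 h).symm
    rw [tree, SimpleGraph.edgeSet_fromEdgeSet, sdiff_eq_left.2 hdiag,
      Nat.card_range_of_injective B.injective_edge_parent, Finite.card_option]

theorem connected_induce_nodeBag (x : V) : (B.tree.induce {t | x ∈ B.nodeBag t}).Connected := by
  have hx : some x ∈ {t | x ∈ B.nodeBag t} := B.mem_bag_self x
  suffices h : ∀ v (hv : x ∈ B.bag v),
      (B.tree.induce {t | x ∈ B.nodeBag t}).Reachable ⟨some v, hv⟩ ⟨some x, hx⟩ by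
    refine (SimpleGraph.connected_iff_exists_forall_reachable _).2 ⟨⟨some x, hx⟩, ?_⟩
    rintro ⟨_ | v, hv⟩
    · exact hv.elim
    · exact (h v hv).symm
  intro v hv
  induction hd : B.depth v using Nat.strong_induction_on generalizing v with
  | _ n ih =>
    by_cases hxv : x = v
    · subst hxv
      rfl
    have hxv' := B.le_of_mem_bag hv
    cases hp : B.parent v with
    | none => exact absurd (B.parent_eq_none hp x hxv') hxv
    | some p =>
      obtain ⟨hpv, hpne, hmax⟩ := B.parent_eq_some hp
      have hxp : x ∈ B.bag p := B.mem_bag_of_le_of_le hv (hmax x hxv' hxv) hpv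
      have hadj : (B.tree.induce {t | x ∈ B.nodeBag t}).Adj ⟨some v, hv⟩ ⟨some p, hxp⟩ :=
        (hp ▸ B.tree_adj_parent v : B.tree.Adj (some v) (some p))
      exact hadj.reachable.trans (ih _ (hd ▸ B.depth_lt_depth hpv hpne) p hxp rfl)

theorem exists_treeDecomp_widthLE (B : BagForestCover G k q) :
    ∃ d : TreeDecomp G, d.widthLE (k - 1) := by
  refine TreeDecomp.exists_widthLE_of_isTree B.tree_isTree B.nodeBag
    (fun v => ⟨some v, B.mem_bag_self v⟩) (fun u v h => ?_) B.connected_induce_nodeBag ?_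
  · rcases B.cover h with huv | hvu
    · exact ⟨some v, B.mem_bag_of_adj h huv, B.mem_bag_self v⟩
    · exact ⟨some u, B.mem_bag_self u, B.mem_bag_of_adj h.symm hvu⟩
  · rintro (_ | v)
    · simp [nodeBag]
    · exact (B.ncard_bag_le v).trans le_tsub_add

end BagForestCover

theorem Tclass_closure_properties_general (k q : ℕ) :
    (∀ G ∈ Tclass k q, ∀ H : GraphB, IsMinor H.2 G.2 → H ∈ Tclass k q) ∧
    (∀ G ∈ Tclass k q, ∀ H ∈ Tclass k q, ∀ D : GraphB,
        Nonempty (D.2 ≃g sumGraph G.2 H.2) → D ∈ Tclass k q) ∧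
    Tclass k q ⊆ TWclass (k - 1) ∩ TDclass q := by
  refine ⟨?_, ?_, ?_⟩
  · rintro G ⟨c⟩ H hHG
    obtain ⟨B⟩ := c.toBagForestCover.nonempty_of_isMinor hHG
    exact B.hasPFC
  · rintro G ⟨cG⟩ H ⟨cH⟩ D ⟨e⟩
    exact ⟨(cG.sum cH).comap e.toHom e.injective⟩
  · rintro G ⟨c⟩
    exact ⟨c.toBagForestCover.exists_treeDecomp_widthLE, c.hasForestCover⟩

/-- `T^k_q` is minor-closed, closed under disjoint unions, and a subclass of
`TW_{k−1} ∩ TD_q`. -/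
theorem Tclass_closure_properties (k q : ℕ) (hk : 1 ≤ k) (hq : 1 ≤ q) :
    (∀ G ∈ Tclass k q, ∀ H : GraphB, IsMinor H.2 G.2 → H ∈ Tclass k q) ∧
    (∀ G ∈ Tclass k q, ∀ H ∈ Tclass k q, ∀ D : GraphB,
        Nonempty (D.2 ≃g sumGraph G.2 H.2) → D ∈ Tclass k q) ∧
    Tclass k q ⊆ TWclass (k - 1) ∩ TDclass q :=
  Tclass_closure_properties_general k q
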